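/- Result preservation under permissive governance: for finite programs, if the ungoverned interpretation of t returns value v, then the governed interpretation of t under the permissive handler also returns v. -/
import Mathlib


inductive DirectiveE : Type
  | MemoryOp (params : Nat) | DBOp (params : Nat) | FileOp (params : Nat)
  | LLMCall (params : Nat) | LLMCallStream (params : Nat)
  | CallMachine (params : Nat) | HTTPRequest (params : Nat) | ExecOp (params : Nat)
  | GraphQLRequest (params : Nat) | WebSocketOp (params : Nat) | MCPCall (params : Nat)
  | ObserveOp (params : Nat)

def is_memory_event : DirectiveE → Bool
  | .MemoryOp _ | .DBOp _ | .FileOp _ => true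
  | _ => false

def is_reason_event : DirectiveE → Bool
  | .LLMCall _ | .LLMCallStream _ => true
  | _ => false

def is_call_event : DirectiveE → Bool
  | .CallMachine _ | .HTTPRequest _ | .ExecOp _
  | .GraphQLRequest _ | .WebSocketOp _ | .MCPCall _ => true
  | _ => false

def is_observe_event : DirectiveE → Bool
  | .ObserveOp _ => true
  | _ => false

/-- Finite interaction trees over events `E` with answer types `Ans`;
`stuck` represents denial of execution. -/
inductive FTree (E : Type) (Ans : E → Type) (R : Type) : Type
  | ret (v : R)
  | stuck
  | vis (e : E) (k : Ans e → FTree E Ans R)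

/-- Every directive is answered by a natural number. -/
def DAns : DirectiveE → Type := fun _ => Nat

/-- Governance-only events, each answered by a `Bool`. -/
inductive GovStage : Type
  | trustCheck | permissionCheck | phaseValidation | preHooks
  | guardrails | provenanceRecord | eventBroadcast

/-- Answer types for the combined event type `GovStage ⊕ IOE`. -/
def GovIOAns {IOE : Type} (IOAns : IOE → Type) : GovStage ⊕ IOE → Type
  | .inl _ => Bool
  | .inr e => IOAns e

section Interp

variable {IOE : Type} {IOAns : IOE → Type} {R : Type}

/-- Ungoverned interpretation with a pure base handler: each directive node is
replaced by the handler's answer fed to the continuation. -/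
def interp (h : (d : DirectiveE) → DAns d) :
    FTree DirectiveE DAns R → FTree IOE IOAns R
  | .ret v => .ret v
  | .stuck => .stuck
  | .vis d k => interp h (k (h d))

/-- A governance pre-check: continue on `true`, get stuck (denied) on `false`. -/
def preCheck (g : GovStage) (next : FTree (GovStage ⊕ IOE) (GovIOAns IOAns) R) :
    FTree (GovStage ⊕ IOE) (GovIOAns IOAns) R :=
  .vis (Sum.inl g) (fun b : Bool => if b then next else .stuck)

/-- Governance post-instrumentation: emit the event and continue. -/
def postRec (g : GovStage) (next : FTree (GovStage ⊕ IOE) (GovIOAns IOAns) R) :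
    FTree (GovStage ⊕ IOE) (GovIOAns IOAns) R :=
  .vis (Sum.inl g) (fun _ : Bool => next)

/-- Governed interpretation: around each directive, insert boolean-answered
governance checks (pre) and instrumentation (post), delegating to the base
handler when all checks pass. -/
def interp_gov (h : (d : DirectiveE) → DAns d) :
    FTree DirectiveE DAns R → FTree (GovStage ⊕ IOE) (GovIOAns IOAns) R
  | .ret v => .ret v
  | .stuck => .stuck
  | .vis d k =>
    preCheck .trustCheck (preCheck .permissionCheck (preCheck .phaseValidation
      (preCheck .preHooks
        (postRec .guardrails (postRec .provenanceRecord (postRec .eventBroadcast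
          (interp_gov h (k (h d)))))))))

/-- Permissive evaluation: answer every governance event with `true`, answer
I/O events via `io_h`. -/
def eval_permissive (io_h : (e : IOE) → IOAns e) :
    FTree (GovStage ⊕ IOE) (GovIOAns IOAns) R → Option R
  | .ret v => some v
  | .stuck => none
  | .vis (Sum.inl _) k => eval_permissive io_h (k true)
  | .vis (Sum.inr e) k => eval_permissive io_h (k (io_h e))

/-- Plain evaluation via the I/O handler alone. -/
def eval_plain (io_h : (e : IOE) → IOAns e) :
    FTree IOE IOAns R → Option R
  | .ret v => some v
  | .stuck => none
  | .vis e k => eval_plain io_h (k (io_h e))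


/-- **Result preservation** under permissive governance: if the ungoverned
interpretation returns `v`, so does the governed (permissive) interpretation. -/
theorem governed_same_result :
    ∀ (IOE : Type) (IOAns : IOE → Type)
      (h : (d : DirectiveE) → DAns d) (io_h : (e : IOE) → IOAns e)
      (R : Type) (t : FTree DirectiveE DAns R) (v : R),
      eval_plain io_h (interp (IOAns := IOAns) h t) = some v →
      eval_permissive io_h (interp_gov h t) = some v := by
  intro IOE IOAns h io_h R t v hv
  induction t with
  | ret w => simpa [interp, interp_gov, eval_plain, eval_permissive] using hv
  | stuck => simp [interp, eval_plain] at hv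
  | vis d k ih =>
    simp only [interp_gov, preCheck, postRec, eval_permissive, if_true]
    exact ih (h d) (by simpa [interp] using hv)
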